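/- arXiv:1810.09825 — 2 statements merged into one kernel-verified Lean document; each statement's English description precedes it below -/
import Mathlib

section
/- Let N ≥ 1, let c : Fin N → ℝ satisfy 0 ≤ c i ≤ 1 for every i, and let s : Fin N → ℝ. Define the interconnectedness matrix M : Matrix (Fin N) (Fin N) ℝ by M i i = 1 and M i j = c i * c j for i ≠ j, let Δ = diagonal s, and set H = Δᵀ * M * Δ. Then H is positive semidefinite. -/
open Matrix

namespace Matrix

variable {n : Type*} [Fintype n] [DecidableEq n]

/-- `M` is the rank-one matrix `c cᵀ` plus a diagonal whose entries `M i i - c i ^ 2` are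
nonnegative. -/
theorem posSemidef_of_offDiag_eq_mul_self {M : Matrix n n ℝ} {c : n → ℝ}
    (hdiag : ∀ i, c i ^ 2 ≤ M i i) (hoff : ∀ i j, i ≠ j → M i j = c i * c j) :
    M.PosSemidef := by
  have hM : M = vecMulVec c c + diagonal fun i => M i i - c i ^ 2 := by
    ext i j
    rcases eq_or_ne i j with rfl | hij
    · simp [vecMulVec_apply, sq]
    · simp [vecMulVec_apply, hoff i j hij, hij]
  rw [hM]
  refine .add (by simpa using posSemidef_vecMulVec_self_star c) ?_
  exact posSemidef_diagonal_iff.mpr fun i => sub_nonneg.mpr (hdiag i)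

end Matrix

theorem interconnectedness_congruence_posSemidef_general (N : ℕ)
    (c : Fin N → ℝ) (hc : ∀ i, 0 ≤ c i ∧ c i ≤ 1)
    (s : Fin N → ℝ)
    (M : Matrix (Fin N) (Fin N) ℝ)
    (hMdiag : ∀ i, M i i = 1)
    (hMoff : ∀ i j, i ≠ j → M i j = c i * c j) :
    ((Matrix.diagonal s)ᵀ * M * Matrix.diagonal s).PosSemidef := by
  have hdiag : ∀ i, c i ^ 2 ≤ M i i := fun i => by
    rw [hMdiag i]
    exact pow_le_one₀ (hc i).1 (hc i).2
  have hM : M.PosSemidef := posSemidef_of_offDiag_eq_mul_self hdiag hMoff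
  simpa using hM.conjTranspose_mul_mul_same (diagonal s)

/-- With `Δ = diagonal s`, the congruence `H = Δᵀ * M * Δ` of the
interconnectedness matrix `M` is positive semidefinite. -/
theorem interconnectedness_congruence_posSemidef (N : ℕ) (hN : 1 ≤ N)
    (c : Fin N → ℝ) (hc : ∀ i, 0 ≤ c i ∧ c i ≤ 1)
    (s : Fin N → ℝ)
    (M : Matrix (Fin N) (Fin N) ℝ)
    (hMdiag : ∀ i, M i i = 1)
    (hMoff : ∀ i j, i ≠ j → M i j = c i * c j) :
    ((Matrix.diagonal s)ᵀ * M * Matrix.diagonal s).PosSemidef :=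
  interconnectedness_congruence_posSemidef_general N c hc s M hMdiag hMoff
end

section
/- Let N ≥ 1, let c : Fin N → ℝ satisfy 0 ≤ c i < 1 for every i, and let s : Fin N → ℝ with s i ≠ 0 for every i. Define the interconnectedness matrix M : Matrix (Fin N) (Fin N) ℝ by M i i = 1 and M i j = c i * c j for i ≠ j, let Δ = diagonal s, and set H = Δᵀ * M * Δ. Then H is positive definite. -/
/-!
The interconnectedness matrix splits as `diagonal (1 - c²) + c cᵀ`: a positive diagonal
matrix plus a positive semidefinite rank-one matrix, hence positive definite as soon as
`c i ^ 2 < 1`. Congruence by the invertible matrix `diagonal s` preserves positive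
definiteness.
-/

open Matrix

namespace Matrix

variable {ι : Type*} [DecidableEq ι]

theorem eq_diagonal_add_vecMulVec_of_offDiag {R : Type*} [CommRing R]
    {M : Matrix ι ι R} {c : ι → R}
    (hdiag : ∀ i, M i i = 1) (hoff : ∀ i j, i ≠ j → M i j = c i * c j) :
    M = diagonal (fun i => 1 - c i ^ 2) + vecMulVec c c := by
  ext i j
  rcases eq_or_ne i j with rfl | hij
  · simp [hdiag, vecMulVec_apply, sq]
  · simp [hoff i j hij, hij, vecMulVec_apply]

theorem posDef_diagonal_one_sub_sq_add_vecMulVec [Fintype ι] {c : ι → ℝ}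
    (hc : ∀ i, c i ^ 2 < 1) :
    (diagonal (fun i => 1 - c i ^ 2) + vecMulVec c c).PosDef :=
  (PosDef.diagonal fun i => sub_pos.mpr (hc i)).add_posSemidef
    (by simpa using posSemidef_vecMulVec_self_star c)

theorem mulVec_diagonal_injective [Fintype ι] {K : Type*} [Field K] {s : ι → K}
    (hs : ∀ i, s i ≠ 0) :
    Function.Injective (diagonal s).mulVec :=
  mulVec_injective_iff_isUnit.mpr <|
    isUnit_diagonal.mpr <| Pi.isUnit_iff.mpr fun i => (hs i).isUnit

end Matrix

theorem interconnectedness_congruence_posDef_general (N : ℕ)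
    (c : Fin N → ℝ) (hc : ∀ i, 0 ≤ c i ∧ c i < 1)
    (s : Fin N → ℝ) (hs : ∀ i, s i ≠ 0)
    (M : Matrix (Fin N) (Fin N) ℝ)
    (hMdiag : ∀ i, M i i = 1)
    (hMoff : ∀ i j, i ≠ j → M i j = c i * c j) :
    ((Matrix.diagonal s)ᵀ * M * Matrix.diagonal s).PosDef := by
  have hc_sq : ∀ i, c i ^ 2 < 1 := fun i => pow_lt_one₀ (hc i).1 (hc i).2 two_ne_zero
  have hM : M.PosDef := by
    rw [eq_diagonal_add_vecMulVec_of_offDiag hMdiag hMoff]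
    exact posDef_diagonal_one_sub_sq_add_vecMulVec hc_sq
  rw [← conjTranspose_eq_transpose_of_trivial]
  exact hM.conjTranspose_mul_mul_same (mulVec_diagonal_injective hs)

/-- With `Δ = diagonal s`, `s i ≠ 0` for all `i`, and `0 ≤ c i < 1` for all
`i`, the congruence `H = Δᵀ * M * Δ` of the interconnectedness matrix `M` is
positive definite. -/
theorem interconnectedness_congruence_posDef (N : ℕ) (hN : 1 ≤ N)
    (c : Fin N → ℝ) (hc : ∀ i, 0 ≤ c i ∧ c i < 1)
    (s : Fin N → ℝ) (hs : ∀ i, s i ≠ 0)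
    (M : Matrix (Fin N) (Fin N) ℝ)
    (hMdiag : ∀ i, M i i = 1)
    (hMoff : ∀ i j, i ≠ j → M i j = c i * c j) :
    ((Matrix.diagonal s)ᵀ * M * Matrix.diagonal s).PosDef :=
  interconnectedness_congruence_posDef_general N c hc s hs M hMdiag hMoff
end
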